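/- Let n ≥ 1, s ∈ ℝ^n with s_i ≥ 0 for all i, and q ∈ {1,…,n}. Then the minimum of (n−q+1)·t + Σ_{i=1}^n v_i − Σ_{i=1}^n d_i·s_i over all (t, v, d) with t ≥ 0, v_i ≥ 0, t + v_i ≥ s_i for all i, 0 ≤ d_i ≤ 1 for all i, and Σ_{i=1}^n d_i = n−q, equals the q-th order statistic s_(q). Equivalently, s_(q) = min{(n−q+1)t + Σ_i v_i : t, v ≥ 0, t + v_i ≥ s_i} − max{Σ_i d_i s_i : d ∈ [0,1]^n, Σ_i d_i = n−q}. -/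

import Mathlib

open Finset

/-- The quantile (pinball) loss `ρ_τ(u)`: `τ*u` if `u ≥ 0`, `(τ-1)*u` if `u < 0`. -/
noncomputable def pinball (τ u : ℝ) : ℝ := if 0 ≤ u then τ * u else (τ - 1) * u

/-- The `τ` sample quantile function `L_τ(y, γ) = ∑ i, ρ_τ (y i - γ)`. -/
noncomputable def sampleQuantileFn {n : ℕ} (τ : ℝ) (y : Fin n → ℝ) (γ : ℝ) : ℝ :=
  ∑ i, pinball τ (y i - γ)

/-- `orderStat y i` is the `(i+1)`-th smallest entry of `y` (i.e. the `(i+1)`-th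
order statistic, with 0-indexed `i : Fin n`). -/
noncomputable def orderStat {n : ℕ} (y : Fin n → ℝ) (i : Fin n) : ℝ :=
  y (Tuple.sort y i)

/-- The `k`-sum operator `S_k(y)`: the sum of the `n - k + 1` largest entries of `y`,
i.e. the sum of the order statistics in (1-indexed) positions `k, …, n`. -/
noncomputable def ksum {n : ℕ} (y : Fin n → ℝ) (k : ℕ) : ℝ :=
  ∑ i ∈ Finset.univ.filter (fun i : Fin n => k ≤ (i : ℕ) + 1), orderStat y i

lemma card_ge (n k : ℕ) (hk : k ≤ n) :
    (univ.filter (fun j : Fin n => k ≤ (j:ℕ))).card = n - k := by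
  rcases Nat.eq_or_lt_of_le hk with h | h
  · have : (univ.filter (fun j : Fin n => k ≤ (j:ℕ))) = ∅ := by
      ext j; simp; omega
    simp [this]; omega
  · have : (univ.filter (fun j : Fin n => k ≤ (j:ℕ))) = Finset.Ici (⟨k, h⟩ : Fin n) := by
      ext j; simp [Fin.le_def]
    rw [this, Fin.card_Ici]

/-- for nonnegative `s`, the minimum of
`(n−q+1)·t + Σ v_i − Σ d_i·s_i` over `t ≥ 0`, `v ≥ 0` with `t + v_i ≥ s_i`, and
`d ∈ [0,1]ⁿ` with `Σ d_i = n − q`, equals the `q`-th order statistic `s_(q)`. -/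
theorem stmt_13 (n : ℕ) (hn : 1 ≤ n) (s : Fin n → ℝ) (hs : ∀ i, 0 ≤ s i)
    (q : ℕ) (hq1 : 1 ≤ q) (hq2 : q ≤ n) :
    IsLeast {w : ℝ | ∃ (t : ℝ) (v d : Fin n → ℝ), 0 ≤ t ∧ (∀ i, 0 ≤ v i) ∧
        (∀ i, s i ≤ t + v i) ∧ (∀ i, 0 ≤ d i ∧ d i ≤ 1) ∧
        (∑ i, d i) = (n : ℝ) - q ∧
        w = ((n : ℝ) - q + 1) * t + (∑ i, v i) - ∑ i, d i * s i}
      (orderStat s ⟨q - 1, by omega⟩) := by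
  set σ := Tuple.sort s with hσ
  have hmono : Monotone (s ∘ σ) := Tuple.monotone_sort s
  set qi : Fin n := ⟨q - 1, by omega⟩ with hqi
  set θ : ℝ := s (σ qi) with hθ
  have horder : orderStat s ⟨q - 1, by omega⟩ = θ := rfl
  have hle : ∀ j : Fin n, (j:ℕ) < q → s (σ j) ≤ θ := by
    intro j hj
    exact hmono (show j ≤ qi from by simp only [Fin.le_def, hqi]; omega)
  have hge : ∀ j : Fin n, q ≤ (j:ℕ) → θ ≤ s (σ j) := by
    intro j hj
    exact hmono (show qi ≤ j from by simp only [Fin.le_def, hqi]; omega)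
  set A : Finset (Fin n) := univ.filter (fun j : Fin n => q ≤ (j:ℕ)) with hA
  have cardA : (A.card : ℝ) = (n : ℝ) - q := by
    rw [hA, card_ge n q hq2, Nat.cast_sub hq2]
  set A' : Finset (Fin n) := univ.filter (fun j : Fin n => q - 1 ≤ (j:ℕ)) with hA'
  have cardA' : (A'.card : ℝ) = (n : ℝ) - q + 1 := by
    rw [hA', card_ge n (q-1) (by omega), Nat.cast_sub (by omega), Nat.cast_sub hq1,
      Nat.cast_one]
    ring
  have hqiA : qi ∉ A := by simp [hA, hqi]; omega
  have hA'ins : A' = insert qi A := by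
    ext j
    simp only [hA', hA, Finset.mem_insert, Finset.mem_filter, Finset.mem_univ, true_and]
    constructor
    · intro h
      rcases Nat.lt_or_ge (j:ℕ) q with h' | h'
      · left; apply Fin.ext; simp [hqi]; omega
      · right; exact h'
    · rintro (rfl | h)
      · simp; change q ≤ q - 1 + 1; omega
      · omega
  rw [horder]
  constructor
  · -- membership
    refine ⟨θ, fun i => max (s i - θ) 0, fun i => if q ≤ ((σ.symm i : Fin n) : ℕ) then 1 else 0,
      hs _, fun i => le_max_right _ _, fun i => ?_, fun i => ?_, ?_, ?_⟩
    · have := le_max_left (s i - θ) (0:ℝ); linarith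
    · exact ⟨by dsimp only; split <;> norm_num, by dsimp only; split <;> norm_num⟩
    · rw [← Equiv.sum_comp σ]
      simp only [Equiv.symm_apply_apply]
      rw [Finset.sum_boole, ← hA, cardA]
    · have h1 : ∑ i, (if q ≤ ((σ.symm i : Fin n) : ℕ) then (1:ℝ) else 0) * s i
          = ∑ j ∈ A, s (σ j) := by
        rw [← Equiv.sum_comp σ (fun i => (if q ≤ ((σ.symm i : Fin n) : ℕ) then (1:ℝ) else 0) * s i)]
        simp only [Equiv.symm_apply_apply, ite_mul, one_mul, zero_mul]
        rw [Finset.sum_ite, Finset.sum_const_zero, add_zero, hA]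
      have h2 : ∑ i, max (s i - θ) 0 = ∑ j ∈ A, (s (σ j) - θ) := by
        rw [← Equiv.sum_comp σ (fun i => max (s i - θ) 0)]
        rw [← Finset.sum_filter_add_sum_filter_not univ (fun j : Fin n => q ≤ (j:ℕ)), ← hA]
        have e1 : ∑ j ∈ A, max (s (σ j) - θ) 0 = ∑ j ∈ A, (s (σ j) - θ) := by
          apply Finset.sum_congr rfl
          intro j hj
          rw [hA, Finset.mem_filter] at hj
          have := hge j hj.2
          exact max_eq_left (by linarith)
        have e2 : ∑ j ∈ univ.filter (fun j : Fin n => ¬ q ≤ (j:ℕ)), max (s (σ j) - θ) 0 = 0 := by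
          apply Finset.sum_eq_zero
          intro j hj
          rw [Finset.mem_filter] at hj
          have := hle j (by omega)
          exact max_eq_right (by linarith)
        rw [e1, e2, add_zero]
      rw [h1, h2, Finset.sum_sub_distrib, Finset.sum_const, nsmul_eq_mul, cardA]
      ring
  · -- lower bound
    rintro w ⟨t, v, d, ht, hv, htv, hd, hsum, rfl⟩
    -- step 1 : ∑ d s ≤ ∑_{j ∈ A} s (σ j)
    have hds : ∑ i, d i * s i ≤ ∑ j ∈ A, s (σ j) := by
      rw [← Equiv.sum_comp σ (fun i => d i * s i)]
      have hsplit := Finset.sum_filter_add_sum_filter_not univ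
        (fun j : Fin n => q ≤ (j:ℕ)) (fun j => d (σ j) * s (σ j))
      rw [← hA] at hsplit
      set B : Finset (Fin n) := univ.filter (fun j : Fin n => ¬ q ≤ (j:ℕ)) with hB
      have hesplit := Finset.sum_filter_add_sum_filter_not univ
        (fun j : Fin n => q ≤ (j:ℕ)) (fun j => d (σ j))
      rw [← hA, ← hB] at hesplit
      have hesum : ∑ j, d (σ j) = (n:ℝ) - q := by
        rw [Equiv.sum_comp σ d]; exact hsum
      have h1 : ∑ j ∈ B, d (σ j) * s (σ j) ≤ θ * ∑ j ∈ B, d (σ j) := by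
        rw [Finset.mul_sum]
        apply Finset.sum_le_sum
        intro j hj
        rw [hB, Finset.mem_filter] at hj
        have h' := hle j (by omega)
        have := (hd (σ j)).1
        nlinarith
      have h2 : θ * ∑ j ∈ A, (1 - d (σ j)) ≤ ∑ j ∈ A, (1 - d (σ j)) * s (σ j) := by
        rw [Finset.mul_sum]
        apply Finset.sum_le_sum
        intro j hj
        rw [hA, Finset.mem_filter] at hj
        have h' := hge j hj.2
        have := (hd (σ j)).2
        nlinarith
      have h3 : ∑ j ∈ A, (1 - d (σ j)) = ∑ j ∈ B, d (σ j) := by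
        rw [Finset.sum_sub_distrib, Finset.sum_const, nsmul_eq_mul, mul_one, cardA]
        linarith [hesplit, hesum]
      have h4 : ∑ j ∈ A, (1 - d (σ j)) * s (σ j)
          = ∑ j ∈ A, s (σ j) - ∑ j ∈ A, d (σ j) * s (σ j) := by
        rw [← Finset.sum_sub_distrib]
        apply Finset.sum_congr rfl
        intros; ring
      rw [h3] at h2
      linarith
    -- step 2 : θ + ∑_{j ∈ A} s (σ j) ≤ (n - q + 1) t + ∑ v
    have htvs : θ + ∑ j ∈ A, s (σ j) ≤ ((n:ℝ) - q + 1) * t + ∑ i, v i := by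
      have e1 : θ + ∑ j ∈ A, s (σ j) = ∑ j ∈ A', s (σ j) := by
        rw [hA'ins, Finset.sum_insert hqiA]
      have e2 : ∑ j ∈ A', s (σ j) ≤ ∑ j ∈ A', (t + v (σ j)) :=
        Finset.sum_le_sum (fun j _ => htv (σ j))
      have e3 : ∑ j ∈ A', (t + v (σ j)) = ((n:ℝ) - q + 1) * t + ∑ j ∈ A', v (σ j) := by
        rw [Finset.sum_add_distrib, Finset.sum_const, nsmul_eq_mul, cardA']
      have e4 : ∑ j ∈ A', v (σ j) ≤ ∑ j, v (σ j) :=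
        Finset.sum_le_sum_of_subset_of_nonneg (Finset.subset_univ A')
          (fun j _ _ => hv (σ j))
      have e5 : ∑ j, v (σ j) = ∑ i, v i := Equiv.sum_comp σ v
      linarith
    linarith
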